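/- Let μ and ν be Borel probability measures on ℝ and let z ∈ ℂ∖ℝ. Then 1 − x·G_ν(z) ≠ 0 for every x ∈ ℝ, and for every ψ ∈ L²(ℝ×ℝ, μ⊗ν) the function φ(x,y) = ψ(x,y)/(z−y) + x·(∫_ℝ ψ(x,y′)/(z−y′) dν(y′)) / ((z−y)(1−x·G_ν(z))) belongs to L²(ℝ×ℝ, μ⊗ν); the assignment ψ ↦ φ is a bounded linear operator on L²(μ⊗ν); the functions (x,y) ↦ x·∫_ℝ φ(x,y′) dν(y′) and (x,y) ↦ y·φ(x,y) belong to L²(μ⊗ν); and z·φ(x,y) − x·∫_ℝ φ(x,y′) dν(y′) − y·φ(x,y) = ψ(x,y) for μ⊗ν-almost every (x,y). (That is, the displayed formula defines a bounded right inverse of the operator z − M_x P₂ − M_y of the monotone model.) -/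

import Mathlib

/-!
With `G = G_ν(z)` and `F(x) = ∫ ψ(x,y)/(z−y) dν(y)`, the formula reads `φ = (ψ + N(x))/(z − y)`
where `N(x) = x F(x)/(1 − xG)`. Integrating in `y` gives `∫ φ(x,·) dν = F + N G = F/(1 − xG)`,
hence `x ∫ φ(x,·) dν = N(x)` and `(z − y) φ − x ∫ φ(x,·) dν = ψ`.

For the bounds: `Im z · Im G < 0`, and `Im (1 − xG) = −x Im G` gives `|x| |Im G| ≤ |1 − xG|`,
so `|N| ≤ |F| / |Im G|`. By Jensen's inequality on the probability space `(ℝ, ν)`,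
`‖F‖₂ ≤ ‖ψ‖₂ / |Im z|`, and each division by `z − y` costs another factor `1 / |Im z|`.
-/

open MeasureTheory

/-- The Cauchy transform `G_ρ(z) = ∫ 1/(z−t) dρ(t)` of a measure on `ℝ`. -/
noncomputable def cauchyTransform (ρ : Measure ℝ) (z : ℂ) : ℂ := ∫ t, (z - (t : ℂ))⁻¹ ∂ρ

/-- The candidate resolvent `φ(x,y) = ψ(x,y)/(z−y)
+ x·(∫ ψ(x,y′)/(z−y′) dν(y′)) / ((z−y)(1−x·G_ν(z)))` of the monotone model. -/
noncomputable def monResolvent (ν : Measure ℝ) (z : ℂ) (ψ : ℝ × ℝ → ℂ) : ℝ × ℝ → ℂ :=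
  fun p =>
    ψ p / (z - (p.2 : ℂ)) +
      ((p.1 : ℂ) * ∫ y, ψ (p.1, y) / (z - (y : ℂ)) ∂ν) /
        ((z - (p.2 : ℂ)) * (1 - (p.1 : ℂ) * cauchyTransform ν z))

open scoped ENNReal

section ComplexBounds

variable {z : ℂ}

lemma sub_ofReal_ne_zero (hz : z.im ≠ 0) (y : ℝ) : z - y ≠ 0 :=
  fun h => hz (by simpa using congrArg Complex.im h)

lemma norm_div_sub_ofReal_le (hz : z.im ≠ 0) (w : ℂ) (y : ℝ) :
    ‖w / (z - y)‖ ≤ |z.im|⁻¹ * ‖w‖ := by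
  have him : |z.im| ≤ ‖z - y‖ := by
    simpa using Complex.abs_im_le_norm (z - y)
  rw [norm_div, div_eq_inv_mul]
  gcongr

lemma abs_mul_abs_im_le_norm_one_sub_ofReal_mul (x : ℝ) (G : ℂ) :
    |x| * |G.im| ≤ ‖1 - x * G‖ := by
  simpa [abs_mul] using Complex.abs_im_le_norm (1 - x * G)

lemma one_sub_ofReal_mul_ne_zero {G : ℂ} (hG : G.im ≠ 0) (x : ℝ) : 1 - x * G ≠ 0 := by
  rcases eq_or_ne x 0 with rfl | hx
  · simp
  · rw [← norm_pos_iff]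
    exact (mul_pos (abs_pos.2 hx) (abs_pos.2 hG)).trans_le
      (abs_mul_abs_im_le_norm_one_sub_ofReal_mul x G)

lemma norm_ofReal_mul_div_one_sub_le {G : ℂ} (hG : G.im ≠ 0) (x : ℝ) (w : ℂ) :
    ‖x * w / (1 - x * G)‖ ≤ |G.im|⁻¹ * ‖w‖ := by
  have hpos : 0 < ‖1 - x * G‖ := norm_pos_iff.2 (one_sub_ofReal_mul_ne_zero hG x)
  have hx : |x| ≤ |G.im|⁻¹ * ‖1 - x * G‖ := by
    rw [le_inv_mul_iff₀ (abs_pos.2 hG), mul_comm]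
    exact abs_mul_abs_im_le_norm_one_sub_ofReal_mul x G
  rw [norm_div, div_le_iff₀ hpos, norm_mul, Complex.norm_real, Real.norm_eq_abs]
  calc |x| * ‖w‖ ≤ |G.im|⁻¹ * ‖1 - x * G‖ * ‖w‖ := by gcongr
    _ = |G.im|⁻¹ * ‖w‖ * ‖1 - x * G‖ := by ring

end ComplexBounds

lemma integral_pos_of_forall_pos {α : Type*} [MeasurableSpace α] {μ : Measure α} [NeZero μ]
    {f : α → ℝ} (hfi : Integrable f μ) (hf : ∀ a, 0 < f a) : 0 < ∫ a, f a ∂μ := by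
  rw [integral_pos_iff_support_of_nonneg (fun a => (hf a).le) hfi,
    Function.support_eq_univ fun a => (hf a).ne']
  exact Measure.measure_univ_pos.2 (NeZero.ne μ)

section CauchyTransform

variable {ν : Measure ℝ} [IsFiniteMeasure ν] {z : ℂ}

lemma integrable_inv_sub_ofReal (hz : z.im ≠ 0) :
    Integrable (fun t : ℝ => (z - t)⁻¹) ν := by
  refine Integrable.mono' (integrable_const |z.im|⁻¹) (by fun_prop) (.of_forall fun t => ?_)
  simpa only [one_div, norm_one, mul_one] using norm_div_sub_ofReal_le hz 1 t

lemma im_mul_im_cauchyTransform_neg [NeZero ν] (hz : z.im ≠ 0) :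
    z.im * (cauchyTransform ν z).im < 0 := by
  have hint := integrable_inv_sub_ofReal (ν := ν) hz
  have him := integral_im hint
  simp only [RCLike.im_to_complex] at him
  rw [cauchyTransform, ← him, ← integral_const_mul, ← neg_pos, ← integral_neg]
  refine integral_pos_of_forall_pos (hint.im.const_mul _).neg fun t => ?_
  have hpos : 0 < Complex.normSq (z - t) := Complex.normSq_pos.2 (sub_ofReal_ne_zero hz t)
  simp only [Complex.inv_im, Complex.sub_im, Complex.ofReal_im, sub_zero]
  rw [neg_pos, mul_div_assoc']
  exact div_neg_of_neg_of_pos (by nlinarith [mul_self_pos.2 hz]) hpos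

lemma im_cauchyTransform_ne_zero [NeZero ν] (hz : z.im ≠ 0) : (cauchyTransform ν z).im ≠ 0 :=
  right_ne_zero_of_mul (im_mul_im_cauchyTransform_neg hz).ne

end CauchyTransform

section Lp

variable {α β E : Type*} [MeasurableSpace α] [MeasurableSpace β] {p : ℝ≥0∞}

lemma eLpNorm_div_sub_ofReal_le {ρ : Measure α} {z : ℂ} (hz : z.im ≠ 0) (f : α → ℂ)
    (g : α → ℝ) :
    eLpNorm (fun a => f a / (z - g a)) p ρ ≤ ENNReal.ofReal |z.im|⁻¹ * eLpNorm f p ρ :=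
  eLpNorm_le_mul_eLpNorm_of_ae_le_mul (.of_forall fun _ => norm_div_sub_ofReal_le hz _ _) p

lemma MeasureTheory.MemLp.div_sub_ofReal {ρ : Measure α} {z : ℂ} (hz : z.im ≠ 0) {f : α → ℂ}
    {g : α → ℝ} (hf : MemLp f p ρ) (hg : Measurable g) : MemLp (fun a => f a / (z - g a)) p ρ :=
  hf.of_le_mul (hf.1.mul (by fun_prop : Measurable fun a => (z - g a)⁻¹).aestronglyMeasurable)
    (.of_forall fun _ => norm_div_sub_ofReal_le hz _ _)

variable [NormedAddCommGroup E] [NormedSpace ℝ E] {μ : Measure α} {ν : Measure β}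
  [IsProbabilityMeasure ν]

lemma eLpNorm_integral_prod_left_le (hp1 : 1 ≤ p) (hp : p ≠ ∞) {f : α × β → E}
    (hf : AEStronglyMeasurable f (μ.prod ν)) :
    eLpNorm (fun x => ∫ y, f (x, y) ∂ν) p μ ≤ eLpNorm f p (μ.prod ν) := by
  have hp0 : p ≠ 0 := (zero_lt_one.trans_le hp1).ne'
  have hq : 0 < p.toReal := ENNReal.toReal_pos hp0 hp
  rw [eLpNorm_eq_lintegral_rpow_enorm_toReal hp0 hp,
    eLpNorm_eq_lintegral_rpow_enorm_toReal hp0 hp, lintegral_prod _ (hf.enorm.pow_const _)]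
  gcongr ?_ ^ _
  refine lintegral_mono_ae ?_
  filter_upwards [hf.prodMk_left] with x hx
  have hjensen : ‖∫ y, f (x, y) ∂ν‖ₑ ≤ eLpNorm (fun y => f (x, y)) p ν :=
    calc ‖∫ y, f (x, y) ∂ν‖ₑ ≤ ∫⁻ y, ‖f (x, y)‖ₑ ∂ν := enorm_integral_le_lintegral_enorm _
      _ = eLpNorm (fun y => f (x, y)) 1 ν := eLpNorm_one_eq_lintegral_enorm.symm
      _ ≤ eLpNorm (fun y => f (x, y)) p ν := eLpNorm_le_eLpNorm_of_exponent_le hp1 hx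
  rw [eLpNorm_eq_lintegral_rpow_enorm_toReal hp0 hp] at hjensen
  calc ‖∫ y, f (x, y) ∂ν‖ₑ ^ p.toReal
      ≤ ((∫⁻ y, ‖f (x, y)‖ₑ ^ p.toReal ∂ν) ^ (1 / p.toReal)) ^ p.toReal := by gcongr
    _ = ∫⁻ y, ‖f (x, y)‖ₑ ^ p.toReal ∂ν := by
      rw [← ENNReal.rpow_mul, one_div_mul_cancel hq.ne', ENNReal.rpow_one]

lemma MeasureTheory.MemLp.integral_prod_left (hp1 : 1 ≤ p) (hp : p ≠ ∞) {f : α × β → E}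
    (hf : MemLp f p (μ.prod ν)) : MemLp (fun x => ∫ y, f (x, y) ∂ν) p μ :=
  ⟨hf.1.integral_prod_right', (eLpNorm_integral_prod_left_le hp1 hp hf.1).trans_lt hf.2⟩

end Lp

section MonotoneModel

noncomputable def fiberCauchyTransform (ν : Measure ℝ) (z : ℂ) (ψ : ℝ × ℝ → ℂ) (x : ℝ) : ℂ :=
  ∫ y, ψ (x, y) / (z - y) ∂ν

/-- `M_x P₂` applied to `monResolvent ν z ψ`, see `ofReal_mul_integral_monResolvent`. -/
noncomputable def monResolventProj (ν : Measure ℝ) (z : ℂ) (ψ : ℝ × ℝ → ℂ) (x : ℝ) : ℂ :=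
  x * fiberCauchyTransform ν z ψ x / (1 - x * cauchyTransform ν z)

variable {μ ν : Measure ℝ} {z : ℂ} {ψ : ℝ × ℝ → ℂ} {p : ℝ≥0∞}

lemma monResolvent_eq (ψ : ℝ × ℝ → ℂ) (q : ℝ × ℝ) :
    monResolvent ν z ψ q = (ψ q + monResolventProj ν z ψ q.1) / (z - q.2) := by
  rw [add_div, monResolventProj, div_div, mul_comm (1 - _)]
  rfl

lemma monResolvent_smul (c : ℂ) (ψ : ℝ × ℝ → ℂ) :
    monResolvent ν z (c • ψ) = c • monResolvent ν z ψ := by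
  funext q
  have hF : fiberCauchyTransform ν z (c • ψ) q.1 = c * fiberCauchyTransform ν z ψ q.1 := by
    simp only [fiberCauchyTransform, Pi.smul_apply, smul_eq_mul, mul_div_assoc]
    exact integral_const_mul c _
  simp only [monResolvent_eq, monResolventProj, hF, Pi.smul_apply, smul_eq_mul]
  ring

lemma sub_mul_monResolvent (hz : z.im ≠ 0) (q : ℝ × ℝ) :
    (z - q.2) * monResolvent ν z ψ q = ψ q + monResolventProj ν z ψ q.1 := by
  rw [monResolvent_eq, mul_div_cancel₀ _ (sub_ofReal_ne_zero hz _)]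

lemma monResolvent_eq_div_sub_snd (ψ : ℝ × ℝ → ℂ) :
    monResolvent ν z ψ =
      fun q => (ψ + monResolventProj ν z ψ ∘ Prod.fst : ℝ × ℝ → ℂ) q / (z - q.2) :=
  funext (monResolvent_eq ψ)

lemma ofReal_snd_mul_monResolvent (hz : z.im ≠ 0) (q : ℝ × ℝ) :
    q.2 * monResolvent ν z ψ q =
      z * monResolvent ν z ψ q - ψ q - monResolventProj ν z ψ q.1 := by
  linear_combination -(sub_mul_monResolvent (ν := ν) hz q)

variable [IsProbabilityMeasure ν]

lemma ofReal_mul_integral_monResolvent (hz : z.im ≠ 0) {x : ℝ}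
    (hx : Integrable (fun y => ψ (x, y) / (z - y)) ν) :
    x * ∫ y, monResolvent ν z ψ (x, y) ∂ν = monResolventProj ν z ψ x := by
  have hG := one_sub_ofReal_mul_ne_zero (im_cauchyTransform_ne_zero (ν := ν) hz) x
  have hfiber : (fun y => monResolvent ν z ψ (x, y))
      = fun y => ψ (x, y) / (z - y) + monResolventProj ν z ψ x * (z - y)⁻¹ := by
    funext y
    rw [monResolvent_eq, add_div, div_eq_mul_inv (monResolventProj ν z ψ x)]
  rw [hfiber, integral_add hx ((integrable_inv_sub_ofReal hz).const_mul _), integral_const_mul]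
  change x * (fiberCauchyTransform ν z ψ x + monResolventProj ν z ψ x * cauchyTransform ν z) = _
  simp only [monResolventProj]
  field_simp
  ring

lemma ae_integrable_div_sub_ofReal [IsFiniteMeasure μ] (hz : z.im ≠ 0) (hp1 : 1 ≤ p)
    (hψ : MemLp ψ p (μ.prod ν)) : ∀ᵐ x ∂μ, Integrable (fun y => ψ (x, y) / (z - y)) ν :=
  ((hψ.div_sub_ofReal hz measurable_snd).integrable hp1).prod_right_ae

lemma monResolvent_add_ae [IsFiniteMeasure μ] (hz : z.im ≠ 0) (hp1 : 1 ≤ p) {ψ' : ℝ × ℝ → ℂ}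
    (hψ : MemLp ψ p (μ.prod ν)) (hψ' : MemLp ψ' p (μ.prod ν)) :
    monResolvent ν z (ψ + ψ') =ᵐ[μ.prod ν] monResolvent ν z ψ + monResolvent ν z ψ' := by
  have hF : ∀ᵐ x ∂μ, fiberCauchyTransform ν z (ψ + ψ') x
      = fiberCauchyTransform ν z ψ x + fiberCauchyTransform ν z ψ' x := by
    filter_upwards [ae_integrable_div_sub_ofReal hz hp1 hψ,
      ae_integrable_div_sub_ofReal hz hp1 hψ'] with x hx hx'
    simp only [fiberCauchyTransform, Pi.add_apply, add_div]
    exact integral_add hx hx'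
  filter_upwards [Measure.quasiMeasurePreserving_fst.ae hF] with q hq
  simp only [Pi.add_apply, monResolvent_eq, monResolventProj, hq]
  ring

lemma ofReal_fst_mul_integral_monResolvent_ae [IsFiniteMeasure μ] (hz : z.im ≠ 0) (hp1 : 1 ≤ p)
    (hψ : MemLp ψ p (μ.prod ν)) :
    (fun q : ℝ × ℝ => (q.1 : ℂ) * ∫ y, monResolvent ν z ψ (q.1, y) ∂ν)
      =ᵐ[μ.prod ν] fun q => monResolventProj ν z ψ q.1 :=
  Measure.quasiMeasurePreserving_fst.ae <|
    (ae_integrable_div_sub_ofReal hz hp1 hψ).mono fun _ hx =>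
      ofReal_mul_integral_monResolvent hz hx

lemma memLp_fiberCauchyTransform (hz : z.im ≠ 0) (hp1 : 1 ≤ p) (hp : p ≠ ∞)
    (hψ : MemLp ψ p (μ.prod ν)) : MemLp (fiberCauchyTransform ν z ψ) p μ :=
  (hψ.div_sub_ofReal hz measurable_snd).integral_prod_left hp1 hp

lemma memLp_monResolventProj (hz : z.im ≠ 0) (hp1 : 1 ≤ p) (hp : p ≠ ∞)
    (hψ : MemLp ψ p (μ.prod ν)) : MemLp (monResolventProj ν z ψ) p μ := by
  have hF := memLp_fiberCauchyTransform hz hp1 hp hψ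
  refine hF.of_le_mul ?_ (.of_forall fun x =>
    norm_ofReal_mul_div_one_sub_le (im_cauchyTransform_ne_zero hz) x _)
  exact ((by fun_prop : Measurable fun x : ℝ => (x : ℂ)).aestronglyMeasurable.mul hF.1).mul
    (by fun_prop : Measurable fun x : ℝ => (1 - x * cauchyTransform ν z)⁻¹).aestronglyMeasurable

lemma memLp_monResolvent (hz : z.im ≠ 0) (hp1 : 1 ≤ p) (hp : p ≠ ∞)
    (hψ : MemLp ψ p (μ.prod ν)) : MemLp (monResolvent ν z ψ) p (μ.prod ν) := by
  rw [monResolvent_eq_div_sub_snd]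
  exact (hψ.add ((memLp_monResolventProj hz hp1 hp hψ).comp_fst ν)).div_sub_ofReal hz measurable_snd

lemma eLpNorm_monResolvent_le (hz : z.im ≠ 0) (hp1 : 1 ≤ p) (hp : p ≠ ∞)
    (hψ : MemLp ψ p (μ.prod ν)) :
    eLpNorm (monResolvent ν z ψ) p (μ.prod ν) ≤
      ENNReal.ofReal (|z.im|⁻¹ * (1 + |(cauchyTransform ν z).im|⁻¹ * |z.im|⁻¹)) *
        eLpNorm ψ p (μ.prod ν) := by
  have hfst : MeasurePreserving Prod.fst (μ.prod ν) μ := measurePreserving_fst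
  set d := |z.im|⁻¹
  set g := |(cauchyTransform ν z).im|⁻¹
  have hF : eLpNorm (fiberCauchyTransform ν z ψ) p μ ≤ .ofReal d * eLpNorm ψ p (μ.prod ν) :=
    (eLpNorm_integral_prod_left_le hp1 hp (hψ.div_sub_ofReal hz measurable_snd).1).trans
      (eLpNorm_div_sub_ofReal_le hz ψ Prod.snd)
  have hN : eLpNorm (monResolventProj ν z ψ) p μ ≤
      .ofReal g * eLpNorm (fiberCauchyTransform ν z ψ) p μ :=
    eLpNorm_le_mul_eLpNorm_of_ae_le_mul
      (.of_forall fun x => norm_ofReal_mul_div_one_sub_le (im_cauchyTransform_ne_zero hz) x _) p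
  have hNfst : eLpNorm (monResolventProj ν z ψ ∘ Prod.fst) p (μ.prod ν)
      = eLpNorm (monResolventProj ν z ψ) p μ :=
    eLpNorm_comp_measurePreserving (memLp_monResolventProj hz hp1 hp hψ).1 hfst
  rw [monResolvent_eq_div_sub_snd]
  calc _ ≤ .ofReal d * eLpNorm (ψ + monResolventProj ν z ψ ∘ Prod.fst) p (μ.prod ν) :=
        eLpNorm_div_sub_ofReal_le hz _ Prod.snd
    _ ≤ .ofReal d *
          (eLpNorm ψ p (μ.prod ν) + .ofReal g * (.ofReal d * eLpNorm ψ p (μ.prod ν))) := by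
        gcongr
        refine (eLpNorm_add_le hψ.1 ?_ hp1).trans ?_
        · exact (memLp_monResolventProj hz hp1 hp hψ).1.comp_measurePreserving hfst
        · rw [hNfst]
          gcongr
          exact hN.trans (by gcongr)
    _ = .ofReal (d * (1 + g * d)) * eLpNorm ψ p (μ.prod ν) := by
        rw [ENNReal.ofReal_mul (by positivity), ENNReal.ofReal_add zero_le_one (by positivity),
          ENNReal.ofReal_one, ENNReal.ofReal_mul (by positivity)]
        ring

end MonotoneModel

theorem monotone_model_resolvent
    (μ ν : Measure ℝ) [IsProbabilityMeasure μ] [IsProbabilityMeasure ν]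
    (z : ℂ) (hz : z.im ≠ 0) :
    (∀ x : ℝ, 1 - (x : ℂ) * cauchyTransform ν z ≠ 0) ∧
    (∃ C : NNReal,
      ∀ ψ : ℝ × ℝ → ℂ, MemLp ψ 2 (μ.prod ν) →
        MemLp (monResolvent ν z ψ) 2 (μ.prod ν) ∧
        eLpNorm (monResolvent ν z ψ) 2 (μ.prod ν) ≤ (C : ENNReal) * eLpNorm ψ 2 (μ.prod ν)) ∧
    (∀ ψ ψ' : ℝ × ℝ → ℂ, MemLp ψ 2 (μ.prod ν) → MemLp ψ' 2 (μ.prod ν) →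
      monResolvent ν z (ψ + ψ') =ᵐ[μ.prod ν] monResolvent ν z ψ + monResolvent ν z ψ') ∧
    (∀ (c : ℂ) (ψ : ℝ × ℝ → ℂ), MemLp ψ 2 (μ.prod ν) →
      monResolvent ν z (c • ψ) =ᵐ[μ.prod ν] c • monResolvent ν z ψ) ∧
    (∀ ψ : ℝ × ℝ → ℂ, MemLp ψ 2 (μ.prod ν) →
      MemLp (fun p : ℝ × ℝ => (p.1 : ℂ) * ∫ y, monResolvent ν z ψ (p.1, y) ∂ν) 2 (μ.prod ν) ∧
      MemLp (fun p : ℝ × ℝ => (p.2 : ℂ) * monResolvent ν z ψ p) 2 (μ.prod ν) ∧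
      ∀ᵐ p ∂(μ.prod ν),
        z * monResolvent ν z ψ p
          - (p.1 : ℂ) * (∫ y, monResolvent ν z ψ (p.1, y) ∂ν)
          - (p.2 : ℂ) * monResolvent ν z ψ p = ψ p) := by
  have h1 : (1 : ℝ≥0∞) ≤ 2 := one_le_two
  have h2 : (2 : ℝ≥0∞) ≠ ∞ := ENNReal.ofNat_ne_top
  refine ⟨one_sub_ofReal_mul_ne_zero (im_cauchyTransform_ne_zero hz),
    ⟨_, fun ψ hψ => ⟨memLp_monResolvent hz h1 h2 hψ, eLpNorm_monResolvent_le hz h1 h2 hψ⟩⟩,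
    fun ψ ψ' hψ hψ' => monResolvent_add_ae hz h1 hψ hψ',
    fun c ψ _ => by rw [monResolvent_smul], fun ψ hψ => ?_⟩
  have hproj := ofReal_fst_mul_integral_monResolvent_ae hz h1 hψ
  have hN := (memLp_monResolventProj hz h1 h2 hψ).comp_fst ν
  refine ⟨hN.ae_eq hproj.symm, ?_, ?_⟩
  · simp_rw [ofReal_snd_mul_monResolvent hz]
    exact (((memLp_monResolvent hz h1 h2 hψ).const_mul z).sub hψ).sub hN
  · filter_upwards [hproj] with q hq
    rw [hq, ofReal_snd_mul_monResolvent hz]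
    ring
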